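/- arXiv:1607.08542 — 2 statements merged into one kernel-verified Lean document; each statement's English description precedes it below -/
import Mathlib

section
/- Let q be a prime power and k an algebraically closed field containing F_q. The rational map Ψ from the affine plane to itself given by Ψ(u,v) = ((v^q - v)/(u^q v - u v^q), (u - u^q)/(u^q v - u v^q)) is generically injective: for a general point (α, β) (specifically, whenever αβ ≠ 0, α u + 1 ≠ 0, and the denominators appearing are nonzero), any solution (u,v) with u^q v - u v^q ≠ 0 of Ψ(u,v) = (α,β) satisfies v = -(α u + 1)/β and u^q = (-β^{q-1} + (-1)^{q-1})/(α β^{q-1} - (-1)^{q-1} α^q); in particular the fibre of Ψ over (α,β) has at most one point. -/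
/-- The rational map `Ψ(u,v) = ((v^q - v)/(u^q v - u v^q), (u - u^q)/(u^q v - u v^q))` is
generically injective: for suitable `(α, β)`, any solution `(u,v)` of `Ψ(u,v) = (α,β)`
satisfies `v = -(αu+1)/β` and
`u^q = (-β^{q-1} + (-1)^{q-1})/(α β^{q-1} - (-1)^{q-1} α^q)`; in particular the fibre of
`Ψ` over `(α,β)` has at most one point. -/
theorem stmt10 (p e q : ℕ) (hp : p.Prime) (he : e ≠ 0) (hq : q = p ^ e)
    (k : Type) [Field k] [IsAlgClosed k] [CharP k p]
    (α β : k) (hαβ : α * β ≠ 0)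
    (hden : α * β ^ (q - 1) - (-1) ^ (q - 1) * α ^ q ≠ 0) :
    (∀ u v : k, u ^ q * v - u * v ^ q ≠ 0 → α * u + 1 ≠ 0 →
      (v ^ q - v) / (u ^ q * v - u * v ^ q) = α →
      (u - u ^ q) / (u ^ q * v - u * v ^ q) = β →
      v = -(α * u + 1) / β ∧
      u ^ q = (-β ^ (q - 1) + (-1) ^ (q - 1)) /
        (α * β ^ (q - 1) - (-1) ^ (q - 1) * α ^ q)) ∧
    {x : k × k | x.1 ^ q * x.2 - x.1 * x.2 ^ q ≠ 0 ∧ α * x.1 + 1 ≠ 0 ∧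
      (x.2 ^ q - x.2) / (x.1 ^ q * x.2 - x.1 * x.2 ^ q) = α ∧
      (x.1 - x.1 ^ q) / (x.1 ^ q * x.2 - x.1 * x.2 ^ q) = β}.Subsingleton := by
  haveI : Fact p.Prime := ⟨hp⟩
  have hα : α ≠ 0 := fun h => hαβ (by simp [h])
  have hβ : β ≠ 0 := fun h => hαβ (by simp [h])
  have hq1 : 1 ≤ q := by
    rw [hq]; exact Nat.one_le_pow _ _ hp.pos
  obtain ⟨m, hm⟩ : ∃ m, q = m + 1 := ⟨q - 1, (Nat.succ_pred_eq_of_pos hq1).symm⟩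
  have hm' : q - 1 = m := by omega
  -- (-1)^(q-1) = 1 in k
  have hneg1 : ((-1 : k)) ^ (q - 1) = 1 := by
    rcases hp.eq_two_or_odd' with h2 | hodd
    · subst h2
      haveI : CharP k 2 := by assumption
      rw [CharTwo.neg_eq (1 : k), one_pow]
    · have hqodd : Odd q := by rw [hq]; exact hodd.pow
      have : Even (q - 1) := Nat.Odd.sub_odd hqodd odd_one
      exact this.neg_one_pow
  rw [hneg1] at hden ⊢
  -- frobenius-type lemmas
  have hfrob : ∀ x y : k, (x + y) ^ q = x ^ q + y ^ q := by
    intro x y; rw [hq]; exact add_pow_char_pow x y p e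
  have hfrobsub : ∀ x y : k, (x - y) ^ q = x ^ q - y ^ q := by
    intro x y; rw [hq]; exact sub_pow_char_pow x y e
  have hinj : ∀ x y : k, x ^ q = y ^ q → x = y := by
    intro x y h
    have : (x - y) ^ q = 0 := by rw [hfrobsub, h, sub_self]
    have := pow_eq_zero_iff (by omega : q ≠ 0) |>.mp this
    exact sub_eq_zero.mp this
  -- main pointwise claim
  have main : ∀ u v : k, u ^ q * v - u * v ^ q ≠ 0 → α * u + 1 ≠ 0 →
      (v ^ q - v) / (u ^ q * v - u * v ^ q) = α →
      (u - u ^ q) / (u ^ q * v - u * v ^ q) = β →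
      v = -(α * u + 1) / β ∧
      u ^ q = (-β ^ (q - 1) + 1) / (α * β ^ (q - 1) - 1 * α ^ q) := by
    intro u v hD hau hA hB
    rw [div_eq_iff hD] at hA hB
    have key : (α * u + β * v + 1) * (u ^ q * v - u * v ^ q) = 0 := by
      linear_combination (-u) * hA - v * hB
    have hlin : α * u + β * v + 1 = 0 := by
      rcases mul_eq_zero.mp key with h | h
      · exact h
      · exact absurd h hD
    have hv : v * β = -(α * u + 1) := by linear_combination hlin
    constructor
    · rw [eq_div_iff hβ]; exact hv
    · have E3 : v ^ q * β ^ q = -(α ^ q * u ^ q + 1) := by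
        have : (v * β) ^ q = (-(α * u + 1)) ^ q := by rw [hv]
        rw [mul_pow] at this
        rw [this]
        have h0 : (-(α * u + 1)) ^ q = (0 - (α * u + 1)) ^ q := by ring_nf
        rw [h0, hfrobsub, hfrob, mul_pow, one_pow]
        rw [zero_pow (by omega : q ≠ 0)]
        ring
      rw [eq_div_iff hden, hm']
      rw [hm] at hA hB E3 ⊢
      linear_combination (β ^ m) * (β * hA - α * hB) - E3 + (β ^ m) * hv
  refine ⟨main, ?_⟩
  rintro ⟨u₁, v₁⟩ ⟨h1D, h1u, h1A, h1B⟩ ⟨u₂, v₂⟩ ⟨h2D, h2u, h2A, h2B⟩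
  obtain ⟨hv1, hu1⟩ := main u₁ v₁ h1D h1u h1A h1B
  obtain ⟨hv2, hu2⟩ := main u₂ v₂ h2D h2u h2A h2B
  have hu : u₁ = u₂ := hinj _ _ (hu1.trans hu2.symm)
  have hv : v₁ = v₂ := by rw [hv1, hv2, hu]
  simp [Prod.ext_iff, hu, hv]
end

section
/- Let q be a prime power, k a field containing F_q, and (α,β,γ) ∈ k^3 \ {0}. The plane curve defined by γ(x^q y - x y^q) + α(y^q z - y z^q) + β(z^q x - z x^q) = 0 over the algebraic closure of k has exactly one singular point, namely [α^{1/q} : β^{1/q} : γ^{1/q}]: the three partial derivatives of the defining polynomial vanish simultaneously at a point [x_0:y_0:z_0] if and only if (x_0^q, y_0^q, z_0^q) is proportional to (α, β, γ). -/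
/-!
Because `q = 0` in `K`, differentiation does not see the `q`-th powers, and the gradient of `F`
at `v` is the cross product of `(α, β, γ)` with the Frobenius twist `(v₀^q, v₁^q, v₂^q)`. It
vanishes exactly when the twist is proportional to `(α, β, γ)`. Over a perfect field the Frobenius
twist is a bijective semilinear map of `K³`, hence induces a bijection of `ℙ²`, so exactly one
projective point is sent to `[α : β : γ]`.
-/

open MvPolynomial
open scoped Matrix LinearAlgebra.Projectivization

section IterateFrobeniusPi

variable (ι R : Type*) [CommSemiring R] (p n : ℕ) [ExpChar R p] [PerfectRing R p]

noncomputable def iterateFrobeniusPi :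
    (ι → R) →ₛₗ[(iterateFrobeniusEquiv R p n : R →+* R)] (ι → R) where
  toFun v i := v i ^ p ^ n
  map_add' v w := funext fun i => add_pow_expChar_pow (v i) (w i) p n
  map_smul' a v := funext fun i => mul_pow a (v i) _

theorem bijective_iterateFrobeniusPi : Function.Bijective (iterateFrobeniusPi ι R p n) :=
  ⟨(bijective_iterateFrobenius R p n).1.comp_left, (bijective_iterateFrobenius R p n).2.comp_left⟩

end IterateFrobeniusPi

namespace Projectivization

variable {K V L W : Type*} [DivisionRing K] [AddCommGroup V] [Module K V]
  [DivisionRing L] [AddCommGroup W] [Module L W] {σ : K →+* L}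

theorem map_surjective (f : V →ₛₗ[σ] W) (hf : Function.Bijective f) :
    Function.Surjective (map f hf.injective) := by
  intro P
  induction P using ind with | h w hw =>
  obtain ⟨v, rfl⟩ := hf.surjective w
  exact ⟨mk K v (by rintro rfl; simp at hw), map_mk ..⟩

theorem map_bijective {τ : L →+* K} [RingHomInvPair σ τ] (f : V →ₛₗ[σ] W)
    (hf : Function.Bijective f) : Function.Bijective (map f hf.injective) :=
  ⟨map_injective f hf.injective, map_surjective f hf⟩

theorem map_eq_mk_iff (f : V →ₛₗ[σ] W) (hf : Function.Injective f) (P : ℙ K V)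
    {w : W} (hw : w ≠ 0) : map f hf P = mk L w hw ↔ ∃ a : L, a • w = f P.rep := by
  conv_lhs => rw [← mk_rep P, map_mk]
  exact mk_eq_mk_iff' ..

end Projectivization

theorem crossProduct_eq_zero_iff {K : Type*} [Field K] {u w : Fin 3 → K} (hu : u ≠ 0) :
    u ⨯₃ w = 0 ↔ ∃ a : K, a • u = w := by
  rw [← not_iff_not, ← ne_eq, crossProduct_ne_zero_iff_linearIndependent,
    LinearIndependent.pair_iff' hu, not_exists]

theorem exists_smul_vec3_eq_iff {K : Type*} [Field K] {w : Fin 3 → K} (hw : w ≠ 0) (α β γ : K) :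
    (∃ a : K, a • ![α, β, γ] = w) ↔
      ∃ l : K, l ≠ 0 ∧ w 0 = l * α ∧ w 1 = l * β ∧ w 2 = l * γ := by
  refine exists_congr fun l => ⟨fun h => ⟨?_, ?_⟩, fun ⟨_, h⟩ => ?_⟩
  · rintro rfl
    exact hw (by rw [← h, zero_smul])
  · simp [← h]
  · ext i
    fin_cases i <;> simp [h]

theorem pderiv_X_pow_eq_zero {σ R : Type*} [CommSemiring R] {q : ℕ} (hq : (q : R) = 0) (i j : σ) :
    pderiv i (X j ^ q : MvPolynomial σ R) = 0 := by
  rw [pderiv_pow, ← map_natCast C, hq, map_zero, zero_mul, zero_mul]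

theorem eval_pderiv_eq_crossProduct {R : Type*} [CommRing R] {q : ℕ} (hq : (q : R) = 0)
    (α β γ : R) (v : Fin 3 → R) (i : Fin 3) :
    eval v (pderiv i (C γ * (X 0 ^ q * X 1 - X 0 * X 1 ^ q) + C α * (X 1 ^ q * X 2 - X 1 * X 2 ^ q)
      + C β * (X 2 ^ q * X 0 - X 2 * X 0 ^ q))) = (![α, β, γ] ⨯₃ fun j => v j ^ q) i := by
  fin_cases i <;> simp [pderiv_X_pow_eq_zero hq, pderiv_X, cross_apply] <;> ring

/-- The curve `{γ(x^q y - x y^q) + α(y^q z - y z^q) + β(z^q x - z x^q) = 0}` has exactly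
one singular point, namely `[α^{1/q} : β^{1/q} : γ^{1/q}]`: the three partial derivatives
vanish at `(x₀,y₀,z₀) ≠ 0` iff `(x₀^q, y₀^q, z₀^q)` is proportional to `(α, β, γ)`. -/
theorem stmt11 (p e q : ℕ) (hp : p.Prime) (he : e ≠ 0) (hq : q = p ^ e)
    (K : Type) [Field K] [IsAlgClosed K] [CharP K p]
    (α β γ : K) (h0 : ¬(α = 0 ∧ β = 0 ∧ γ = 0))
    (F : MvPolynomial (Fin 3) K)
    (hF : F = C γ * (X 0 ^ q * X 1 - X 0 * X 1 ^ q)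
            + C α * (X 1 ^ q * X 2 - X 1 * X 2 ^ q)
            + C β * (X 2 ^ q * X 0 - X 2 * X 0 ^ q)) :
    (∀ v : Fin 3 → K, v ≠ 0 →
      ((∀ i, MvPolynomial.eval v (pderiv i F) = 0) ↔
        ∃ l : K, l ≠ 0 ∧ v 0 ^ q = l * α ∧ v 1 ^ q = l * β ∧ v 2 ^ q = l * γ)) ∧
    (∃! P : Projectivization K (Fin 3 → K),
      ∀ i, MvPolynomial.eval P.rep (pderiv i F) = 0) := by
  subst hq
  have : Fact p.Prime := ⟨hp⟩
  let frob := iterateFrobeniusPi (Fin 3) K p e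
  have hfrob : Function.Bijective frob := bijective_iterateFrobeniusPi (Fin 3) K p e
  have hu : ![α, β, γ] ≠ 0 := by simpa [funext_iff, Fin.forall_fin_succ] using h0
  have hq : ((p ^ e : ℕ) : K) = 0 := by rw [Nat.cast_pow, CharP.cast_eq_zero, zero_pow he]
  have singular_iff (v : Fin 3 → K) :
      (∀ i, eval v (pderiv i F) = 0) ↔ ∃ a : K, a • ![α, β, γ] = frob v := by
    simp_rw [hF, eval_pderiv_eq_crossProduct hq, ← crossProduct_eq_zero_iff hu, funext_iff]
    rfl
  refine ⟨fun v hv => ?_, ?_⟩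
  · rw [singular_iff]
    exact exists_smul_vec3_eq_iff (by simpa using hfrob.1.ne hv) α β γ
  · have := RingHomInvPair.of_ringEquiv (iterateFrobeniusEquiv K p e)
    simp_rw [singular_iff, ← Projectivization.map_eq_mk_iff frob hfrob.1 _ hu]
    exact (Projectivization.map_bijective frob hfrob).existsUnique _
end
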